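/- arXiv:1806.11531 — 5 statements merged into one kernel-verified Lean document; each statement's English description precedes it below -/
import Mathlib

section
/- For all α ∈ (0,1] and probability mass functions W, Q on a finite set Y, the Pinsker-type inequality D_α(W‖Q) ≥ (α/2)·‖W − Q‖₁² holds, where ‖W − Q‖₁ = ∑_y |W(y) − Q(y)| is the total variation distance. -/
open Real MeasureTheory Filter

def IsPMF {Y : Type*} [Fintype Y] (W : Y → ℝ) : Prop :=
  (∀ y, 0 ≤ W y) ∧ ∑ y, W y = 1

noncomputable def renyiDiv {Y : Type*} [Fintype Y] (α : ℝ) (W Q : Y → ℝ) : ℝ :=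
  if α = 1 then ∑ y, W y * Real.log (W y / Q y)
  else (α - 1)⁻¹ * Real.log (∑ y, W y ^ α * Q y ^ (1 - α))

open Classical in
/-- Extended-real-valued order-`α` Rényi divergence, taking the value `⊤` when the
divergence is infinite. -/
noncomputable def renyiDivE {Y : Type*} [Fintype Y] (α : ℝ) (W Q : Y → ℝ) : ENNReal :=
  if α = 1 then
    (if ∀ y, Q y = 0 → W y = 0 then ENNReal.ofReal (renyiDiv 1 W Q) else ⊤)
  else
    (if 0 < ∑ y, W y ^ α * Q y ^ (1 - α) then ENNReal.ofReal (renyiDiv α W Q) else ⊤)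

/-- The order-`α` tilted pmf `W^α_Q`. -/
noncomputable def tilt {Y : Type*} [Fintype Y] (α : ℝ) (W Q : Y → ℝ) : Y → ℝ :=
  fun y => Real.exp ((1 - α) * renyiDiv α W Q) * W y ^ α * Q y ^ (1 - α)

/-- The order-`α` Rényi information `I_α(P;W)` (mutual information for `α = 1`). -/
noncomputable def renyiInfo {X Y : Type*} [Fintype X] [Fintype Y] (α : ℝ) (P : X → ℝ)
    (W : X → Y → ℝ) : ℝ :=
  if α = 1 then ∑ x, P x * ∑ y, W x y * Real.log (W x y / (∑ x', P x' * W x' y))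
  else (α / (α - 1)) * Real.log (∑ y, (∑ x, P x * W x y ^ α) ^ α⁻¹)

/-- The order-`α` Rényi capacity `C_α(W) = sup_P I_α(P;W)`. -/
noncomputable def renyiCap {X Y : Type*} [Fintype X] [Fintype Y] (α : ℝ) (W : X → Y → ℝ) : ℝ :=
  sSup {c | ∃ P : X → ℝ, IsPMF P ∧ c = renyiInfo α P W}

/-- The sphere packing exponent `E_sp(R,W)`. -/
noncomputable def spe {X Y : Type*} [Fintype X] [Fintype Y] (R : ℝ) (W : X → Y → ℝ) : ℝ :=
  sSup {e | ∃ α ∈ Set.Ioo (0:ℝ) 1, e = ((1 - α) / α) * (renyiCap α W - R)}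

/-- The order-`α` Rényi mean `q_{α,P}`. -/
noncomputable def renyiMean {X Y : Type*} [Fintype X] [Fintype Y] (α : ℝ) (P : X → ℝ)
    (W : X → Y → ℝ) : Y → ℝ :=
  fun y => (∑ x, P x * W x y ^ α) ^ α⁻¹ / ∑ y', (∑ x, P x * W x y' ^ α) ^ α⁻¹

/-!
For `α = 1` this is Pinsker's inequality. It follows from the pointwise bound
`3 (p - q)² / (2 (p + 2q)) ≤ p log (p / q) - p + q` (convexity in `t = p / q`) and Cauchy–Schwarz
with weights `p + 2q`, whose total mass is `3`.

For `α < 1` let `R ∝ W^α Q^(1-α)` be the tilted distribution. Then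
`α D₁(R‖W) + (1 - α) D₁(R‖Q) = (1 - α) D_α(W‖Q)`. Applying Pinsker to both divergences on the
left, with `t = ‖R - W‖₁` and `s = ‖R - Q‖₁`, and using `α t² + (1 - α) s² ≥ α (1 - α) (t + s)²`
and `‖W - Q‖₁ ≤ t + s`, gives `(1 - α) D_α(W‖Q) ≥ (1 - α) (α / 2) ‖W - Q‖₁²`.
-/

open Finset Set

theorem three_mul_sq_sub_one_div_le_mul_log_sub {t : ℝ} (ht : 0 < t) :
    3 * (t - 1) ^ 2 / (2 * (t + 2)) ≤ t * log t - t + 1 := by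
  set f : ℝ → ℝ := fun x ↦ x * log x - x + 1 - 3 * (x - 1) ^ 2 / (2 * (x + 2))
  set f' : ℝ → ℝ := fun x ↦ log x - 3 / 2 * (1 - 9 / (x + 2) ^ 2)
  have hf : ∀ x ∈ Ioi (0 : ℝ), HasDerivAt f (f' x) x := fun x (hx : 0 < x) ↦ by
    refine ((((hasDerivAt_id' x).mul (hasDerivAt_log hx.ne')).sub (hasDerivAt_id' x)).add_const 1
      |>.sub ((((hasDerivAt_id' x).sub_const 1).fun_pow 2).const_mul 3 |>.div
        (((hasDerivAt_id' x).add_const 2).const_mul 2) (by positivity))).congr_deriv ?_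
    simp only [f']
    field_simp
    ring
  have hf' : ∀ x ∈ Ioi (0 : ℝ), HasDerivAt f' (x⁻¹ - 27 / (x + 2) ^ 3) x := fun x (hx : 0 < x) ↦ by
    refine ((hasDerivAt_log hx.ne').sub ((((hasDerivAt_const x (9 : ℝ)).div
      (((hasDerivAt_id' x).add_const 2).fun_pow 2) (by positivity)).const_sub 1).const_mul
        (3 / 2))).congr_deriv ?_
    field_simp
    ring
  -- `(x + 2)³ - 27 x = (x - 1)² (x + 8)`, i.e. AM-GM for `x, 1, 1`.
  have hf'' : ∀ x ∈ Ioi (0 : ℝ), 0 ≤ x⁻¹ - 27 / (x + 2) ^ 3 := fun x (hx : 0 < x) ↦ by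
    rw [sub_nonneg, div_le_iff₀ (by positivity), ← div_eq_inv_mul, le_div_iff₀ hx]
    nlinarith [sq_nonneg (x - 1)]
  have hconv : ConvexOn ℝ (Ioi 0) f := by
    refine convexOn_of_hasDerivWithinAt2_nonneg (f' := f')
      (f'' := fun x ↦ x⁻¹ - 27 / (x + 2) ^ 3) (convex_Ioi 0)
      (fun x hx ↦ (hf x hx).continuousAt.continuousWithinAt) ?_ ?_ ?_ <;> rw [interior_Ioi]
    exacts [fun x hx ↦ (hf x hx).hasDerivWithinAt, fun x hx ↦ (hf' x hx).hasDerivWithinAt, hf'']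
  have hmin : IsMinOn f (Ioi 0) 1 := by
    refine hconv.isMinOn_of_rightDeriv_eq_zero (by simp) ?_
    rw [(hf 1 (mem_Ioi.2 one_pos)).hasDerivWithinAt.derivWithin (uniqueDiffWithinAt_Ioi 1)]
    norm_num [f']
  have := hmin ht
  norm_num [f] at this
  linarith

theorem three_mul_sq_sub_div_le_mul_log_div {p q : ℝ} (hp : 0 ≤ p) (hq : 0 ≤ q)
    (hpq : q = 0 → p = 0) :
    3 * (p - q) ^ 2 / (2 * (p + 2 * q)) ≤ p * log (p / q) - p + q := by
  rcases hq.eq_or_lt with rfl | hq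
  · simp [hpq rfl]
  rcases hp.eq_or_lt with rfl | hp
  · rw [div_le_iff₀ (by positivity)]
    nlinarith
  have hlhs : 3 * (p - q) ^ 2 / (2 * (p + 2 * q)) =
      q * (3 * (p / q - 1) ^ 2 / (2 * (p / q + 2))) := by
    field_simp
  have hrhs : p * log (p / q) - p + q = q * (p / q * log (p / q) - p / q + 1) := by
    field_simp
  rw [hlhs, hrhs]
  exact mul_le_mul_of_nonneg_left (three_mul_sq_sub_one_div_le_mul_log_sub (div_pos hp hq)) hq.le

section PMF

variable {Y : Type*} [Fintype Y] {α : ℝ} {W Q : Y → ℝ}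

theorem renyiDiv_one : renyiDiv 1 W Q = ∑ y, W y * log (W y / Q y) := if_pos rfl

theorem pinsker (hW : IsPMF W) (hQ : IsPMF Q) (hWQ : ∀ y, Q y = 0 → W y = 0) :
    (∑ y, |W y - Q y|) ^ 2 / 2 ≤ renyiDiv 1 W Q := by
  have hm : ∀ y, 0 ≤ W y + 2 * Q y := fun y ↦ by linarith [hW.1 y, hQ.1 y]
  have hcs : (∑ y, |W y - Q y|) ^ 2 ≤
      (∑ y, (W y + 2 * Q y)) * ∑ y, (W y - Q y) ^ 2 / (W y + 2 * Q y) := by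
    refine sum_sq_le_sum_mul_sum_of_sq_le_mul _ (fun y _ ↦ hm y)
      (fun y _ ↦ div_nonneg (sq_nonneg _) (hm y)) fun y _ ↦ ?_
    rcases (hm y).eq_or_lt with h | h
    · have : W y = 0 ∧ Q y = 0 := ⟨by linarith [hW.1 y, hQ.1 y], by linarith [hW.1 y, hQ.1 y]⟩
      simp [this]
    · rw [sq_abs, mul_div_cancel₀ _ h.ne']
  have hmass : ∑ y, (W y + 2 * Q y) = 3 := by
    rw [sum_add_distrib, ← mul_sum, hW.2, hQ.2]
    norm_num
  calc (∑ y, |W y - Q y|) ^ 2 / 2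
      ≤ ∑ y, 3 * (W y - Q y) ^ 2 / (2 * (W y + 2 * Q y)) := by
        simp only [mul_div_mul_comm, ← mul_sum]
        rw [hmass] at hcs
        linarith
    _ ≤ ∑ y, (W y * log (W y / Q y) - W y + Q y) :=
        sum_le_sum fun y _ ↦ three_mul_sq_sub_div_le_mul_log_div (hW.1 y) (hQ.1 y) (hWQ y)
    _ = renyiDiv 1 W Q := by
        rw [sum_add_distrib, sum_sub_distrib, hW.2, hQ.2, renyiDiv_one]
        ring

theorem sum_rpow_mul_rpow_pos (hW : IsPMF W) (hQ : ∀ y, 0 ≤ Q y)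
    (hWQ : ∀ y, Q y = 0 → W y = 0) (a b : ℝ) : 0 < ∑ y, W y ^ a * Q y ^ b := by
  obtain ⟨y, hy⟩ : ∃ y, W y ≠ 0 := by
    by_contra! h
    simpa [h] using hW.2
  have hWy : 0 < W y := (hW.1 y).lt_of_ne' hy
  have hQy : 0 < Q y := (hQ y).lt_of_ne' fun h ↦ hy (hWQ y h)
  exact sum_pos' (fun y _ ↦ mul_nonneg (rpow_nonneg (hW.1 y) a) (rpow_nonneg (hQ y) b))
    ⟨y, mem_univ y, by positivity⟩

theorem tilt_eq_div (hα : α ≠ 1) (hpos : 0 < ∑ y, W y ^ α * Q y ^ (1 - α)) (y : Y) :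
    tilt α W Q y = W y ^ α * Q y ^ (1 - α) / ∑ y, W y ^ α * Q y ^ (1 - α) := by
  have : (1 - α) * (α - 1)⁻¹ = -1 := by
    rw [← neg_sub, neg_mul, mul_inv_cancel₀ (sub_ne_zero.2 hα)]
  rw [tilt, renyiDiv, if_neg hα, ← mul_assoc, this, neg_one_mul, exp_neg, exp_log hpos,
    mul_assoc, inv_mul_eq_div]

theorem isPMF_tilt (hα : α ≠ 1) (hW : IsPMF W) (hQ : ∀ y, 0 ≤ Q y)
    (hWQ : ∀ y, Q y = 0 → W y = 0) : IsPMF (tilt α W Q) := by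
  have hpos := sum_rpow_mul_rpow_pos hW hQ hWQ α (1 - α)
  simp only [IsPMF, tilt_eq_div hα hpos, ← sum_div, div_self hpos.ne', and_true]
  exact fun y ↦ div_nonneg (mul_nonneg (rpow_nonneg (hW.1 y) α) (rpow_nonneg (hQ y) _)) hpos.le

theorem tilt_eq_zero_of_left (hα : α ≠ 0) {y : Y} (hy : W y = 0) : tilt α W Q y = 0 := by
  simp [tilt, hy, zero_rpow hα]

theorem tilt_eq_zero_of_right (hα : α ≠ 1) {y : Y} (hy : Q y = 0) : tilt α W Q y = 0 := by
  simp [tilt, hy, zero_rpow (sub_ne_zero.2 hα.symm)]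

theorem log_tilt {y : Y} (hW : 0 < W y) (hQ : 0 < Q y) :
    log (tilt α W Q y) = (1 - α) * renyiDiv α W Q + α * log (W y) + (1 - α) * log (Q y) := by
  rw [tilt, log_mul (by positivity) (by positivity), log_mul (by positivity) (by positivity),
    log_exp, log_rpow hW, log_rpow hQ]

theorem mul_renyiDiv_one_tilt_add_mul (hα₀ : α ≠ 0) (hα₁ : α ≠ 1) (hW : IsPMF W)
    (hQ : ∀ y, 0 ≤ Q y) (hWQ : ∀ y, Q y = 0 → W y = 0) :
    α * renyiDiv 1 (tilt α W Q) W + (1 - α) * renyiDiv 1 (tilt α W Q) Q =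
      (1 - α) * renyiDiv α W Q := by
  set R := tilt α W Q
  have hterm : ∀ y, α * (R y * log (R y / W y)) + (1 - α) * (R y * log (R y / Q y)) =
      R y * ((1 - α) * renyiDiv α W Q) := fun y ↦ by
    by_cases hR : R y = 0
    · simp [hR]
    have hWy : 0 < W y := (hW.1 y).lt_of_ne' fun h ↦ hR (tilt_eq_zero_of_left hα₀ h)
    have hQy : 0 < Q y := (hQ y).lt_of_ne' fun h ↦ hR (tilt_eq_zero_of_right hα₁ h)
    rw [log_div hR hWy.ne', log_div hR hQy.ne', log_tilt hWy hQy]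
    ring
  simp only [renyiDiv_one, mul_sum, ← sum_add_distrib, hterm, ← sum_mul]
  rw [(isPMF_tilt hα₁ hW hQ hWQ).2, one_mul]

end PMF

/-- Pinsker-type inequality for the Rényi divergence. -/
theorem renyiDiv_pinsker {Y : Type*} [Fintype Y] (α : ℝ) (hα : α ∈ Set.Ioc (0:ℝ) 1)
    (W Q : Y → ℝ) (hW : IsPMF W) (hQ : IsPMF Q) (habs : ∀ y, Q y = 0 → W y = 0) :
    renyiDiv α W Q ≥ (α / 2) * (∑ y, |W y - Q y|) ^ 2 := by
  obtain ⟨hα₀, hα₁⟩ := hα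
  rcases hα₁.eq_or_lt with rfl | hα₁
  · linarith [pinsker hW hQ habs]
  have h1α : 0 < 1 - α := by linarith
  set R := tilt α W Q
  have hR : IsPMF R := isPMF_tilt hα₁.ne hW hQ.1 habs
  have hRW := pinsker hR hW fun _ ↦ tilt_eq_zero_of_left hα₀.ne'
  have hRQ := pinsker hR hQ fun _ ↦ tilt_eq_zero_of_right hα₁.ne
  have htri : ∑ y, |W y - Q y| ≤ ∑ y, |R y - W y| + ∑ y, |R y - Q y| := by
    rw [← sum_add_distrib]
    exact sum_le_sum fun y _ ↦ (abs_sub_le _ (R y) _).trans_eq (by rw [abs_sub_comm])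
  refine le_of_mul_le_mul_left ?_ h1α
  calc (1 - α) * (α / 2 * (∑ y, |W y - Q y|) ^ 2)
      = α * (1 - α) * (∑ y, |W y - Q y|) ^ 2 / 2 := by ring
    _ ≤ α * (1 - α) * (∑ y, |R y - W y| + ∑ y, |R y - Q y|) ^ 2 / 2 := by gcongr
    _ ≤ α * ((∑ y, |R y - W y|) ^ 2 / 2) + (1 - α) * ((∑ y, |R y - Q y|) ^ 2 / 2) := by
        nlinarith [sq_nonneg (α * ∑ y, |R y - W y| - (1 - α) * ∑ y, |R y - Q y|)]
    _ ≤ α * renyiDiv 1 R W + (1 - α) * renyiDiv 1 R Q := by gcongr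
    _ = (1 - α) * renyiDiv α W Q := mul_renyiDiv_one_tilt_add_mul hα₀.ne' hα₁.ne hW hQ.1 habs
end

section
/- Let α ∈ (0,1] and W, Q be pmfs on a finite set Y with D_α(W‖Q) < ∞. Define the order-α tilted pmf W^α_Q(y) := e^{(1-α)D_α(W‖Q)}·W(y)^α·Q(y)^{1-α}. Then W^α_Q is a probability mass function and satisfies the identity α·D_1(W^α_Q‖W) + (1-α)·D_1(W^α_Q‖Q) = (1-α)·D_α(W‖Q). -/
open Real MeasureTheory Filter

/-- the tilted pmf is a pmf and satisfies the tilting identity. -/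
theorem tilt_isPMF_and_identity {Y : Type*} [Fintype Y] (α : ℝ) (hα : α ∈ Set.Ioc (0:ℝ) 1)
    (W Q : Y → ℝ) (hW : IsPMF W) (hQ : IsPMF Q) (hfin : renyiDivE α W Q ≠ ⊤) :
    IsPMF (tilt α W Q) ∧
    α * renyiDiv 1 (tilt α W Q) W + (1 - α) * renyiDiv 1 (tilt α W Q) Q
      = (1 - α) * renyiDiv α W Q := by
  obtain ⟨hα0, hα1⟩ := hα
  rcases eq_or_lt_of_le hα1 with h1 | h1
  · -- α = 1 case
    subst h1
    have htilt : tilt 1 W Q = W := by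
      funext y
      simp [tilt, Real.rpow_one]
    have hD : renyiDiv 1 W W = 0 := by
      simp only [renyiDiv, if_pos rfl]
      apply Finset.sum_eq_zero
      intro y _
      rcases eq_or_ne (W y) 0 with h | h
      · simp [h]
      · rw [div_self h, Real.log_one, mul_zero]
    rw [htilt]
    constructor
    · exact hW
    · rw [hD]; ring
  · -- α < 1 case
    have hne : α ≠ 1 := ne_of_lt h1
    set S := ∑ y, W y ^ α * Q y ^ (1 - α) with hSdef
    have hS : 0 < S := by
      simp only [renyiDivE, if_neg hne] at hfin
      by_contra h
      rw [if_neg h] at hfin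
      exact hfin rfl
    have hDval : renyiDiv α W Q = (α - 1)⁻¹ * Real.log S := by
      simp only [renyiDiv, if_neg hne, hSdef]
    have hD : (1 - α) * renyiDiv α W Q = -Real.log S := by
      rw [hDval]
      have : α - 1 ≠ 0 := sub_ne_zero.mpr hne
      field_simp
      ring
    have hexp : Real.exp ((1 - α) * renyiDiv α W Q) = S⁻¹ := by
      rw [hD, ← Real.log_inv, Real.exp_log (inv_pos.mpr hS)]
    have htilt : ∀ y, tilt α W Q y = S⁻¹ * (W y ^ α * Q y ^ (1 - α)) := by
      intro y
      simp only [tilt, hexp, mul_assoc]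
    have hnn : ∀ y, 0 ≤ tilt α W Q y := by
      intro y
      rw [htilt]
      exact mul_nonneg (inv_nonneg.mpr hS.le)
        (mul_nonneg (Real.rpow_nonneg (hW.1 y) _) (Real.rpow_nonneg (hQ.1 y) _))
    have hsum : ∑ y, tilt α W Q y = 1 := by
      simp only [htilt]
      rw [← Finset.mul_sum, ← hSdef, inv_mul_cancel₀ hS.ne']
    refine ⟨⟨hnn, hsum⟩, ?_⟩
    simp only [renyiDiv, if_neg hne, eq_self_iff_true, if_true]
    rw [Finset.mul_sum, Finset.mul_sum, ← Finset.sum_add_distrib]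
    have key : ∀ y ∈ Finset.univ,
        α * (tilt α W Q y * Real.log (tilt α W Q y / W y)) +
          (1 - α) * (tilt α W Q y * Real.log (tilt α W Q y / Q y))
        = tilt α W Q y * (-Real.log S) := by
      intro y _
      rcases eq_or_ne (W y) 0 with hW0 | hW0
      · have : tilt α W Q y = 0 := by
          rw [htilt, hW0, Real.zero_rpow hα0.ne']
          ring
        simp [this]
      rcases eq_or_ne (Q y) 0 with hQ0 | hQ0
      · have : tilt α W Q y = 0 := by
          rw [htilt, hQ0, Real.zero_rpow (by linarith : (1:ℝ) - α ≠ 0)]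
          ring
        simp [this]
      have hWy : 0 < W y := (hW.1 y).lt_of_ne' hW0
      have hQy : 0 < Q y := (hQ.1 y).lt_of_ne' hQ0
      have ht : 0 < tilt α W Q y := by
        rw [htilt]
        positivity
      have hlogt : Real.log (tilt α W Q y)
          = -Real.log S + (α * Real.log (W y) + (1 - α) * Real.log (Q y)) := by
        rw [htilt, Real.log_mul (inv_ne_zero hS.ne')
          (by positivity), Real.log_mul (by positivity) (by positivity),
          Real.log_rpow hWy, Real.log_rpow hQy, Real.log_inv]
      rw [Real.log_div ht.ne' hWy.ne', Real.log_div ht.ne' hQy.ne', hlogt]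
      ring
    rw [Finset.sum_congr rfl key, ← Finset.sum_mul, hsum, one_mul, ← hSdef, ← hDval]
    exact hD.symm
end

section
/- Let α ∈ (0,1] and W, Q be pmfs on a finite set Y with D_α(W‖Q) < ∞, and let W^α_Q be the order-α tilted pmf. Then ∑_y W^α_Q(y)·ln²(W^α_Q(y)/W(y)) ≤ 4e^{-2} + ((1-α)/α)²·(4 + D_α(W‖Q)²). -/
open Real MeasureTheory Filter

/-!
Pointwise, let `u = log (T y / W y)` for the tilted pmf `T`. Where `u ≤ 0`,
`T u² = W e^u u² ≤ 4e⁻² W`, since `z² e^z ≤ 4e⁻²` for `z ≤ 0`. Where `u > 0`, write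
`u = ((1 - α) / α) V` with `V ≥ 0`; the defining identity
`α log (T / W) + (1 - α) log (T / Q) = (1 - α) D` becomes `Q = T e^{V - D}`, so an elementary bound
`V² ≤ A + B e^{V - D}` with `A + B ≤ 4 + D²` gives `T u² ≤ ((1 - α) / α)² (A T + B Q)`.
Summing over `y`, with `W`, `Q` and `T` all summing to one, yields the bound.
-/

namespace Real

theorem one_add_half_sq_le_exp {w : ℝ} (hw : -2 ≤ w) : (1 + w / 2) ^ 2 ≤ exp w := by
  have h := one_sub_div_pow_le_exp_neg (n := 2) (t := -w) (by push_cast; linarith)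
  simpa [sub_eq_add_neg, neg_div] using h

theorem sq_le_four_mul_exp_sub_two {x : ℝ} (hx : 0 ≤ x) : x ^ 2 ≤ 4 * exp (x - 2) := by
  have h := one_add_half_sq_le_exp (w := x - 2) (by linarith)
  nlinarith

theorem exp_mul_sq_le_of_nonpos {z : ℝ} (hz : z ≤ 0) : exp z * z ^ 2 ≤ 4 * exp (-2) := by
  calc exp z * z ^ 2 = exp z * (-z) ^ 2 := by ring
    _ ≤ exp z * (4 * exp (-z - 2)) :=
        mul_le_mul_of_nonneg_left (sq_le_four_mul_exp_sub_two (by linarith)) (exp_pos z).le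
    _ = 4 * exp (-2) := by rw [mul_left_comm, ← exp_add]; ring_nf

theorem sq_le_sub_add_mul_exp {D V : ℝ} (hD : 2 ≤ D) (hV : 0 ≤ V) :
    V ^ 2 ≤ D ^ 2 - 2 * D + 2 * D * exp (V - D) := by
  rcases le_or_gt V (D - 2) with hVD | hVD
  · nlinarith [exp_pos (V - D)]
  · have h := one_add_half_sq_le_exp (w := V - D) (by linarith)
    nlinarith [mul_le_mul_of_nonneg_left h (by linarith : (0 : ℝ) ≤ 2 * D),
      mul_nonneg (by linarith : (0 : ℝ) ≤ D - 2) (sq_nonneg (V - D))]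

theorem exists_sq_le_add_mul_exp (D : ℝ) :
    ∃ A B : ℝ, 0 ≤ A ∧ 0 ≤ B ∧ A + B ≤ 4 + D ^ 2 ∧
      ∀ V, 0 ≤ V → V ^ 2 ≤ A + B * exp (V - D) := by
  rcases le_or_gt 2 D with hD | hD
  · refine ⟨D ^ 2 - 2 * D, 2 * D, by nlinarith, by linarith, by linarith, ?_⟩
    exact fun V hV => sq_le_sub_add_mul_exp hD hV
  · refine ⟨0, 4, le_rfl, by norm_num, by nlinarith, fun V hV => ?_⟩
    calc V ^ 2 ≤ 4 * exp (V - 2) := sq_le_four_mul_exp_sub_two hV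
      _ ≤ 0 + 4 * exp (V - D) := by rw [zero_add]; gcongr

end Real

open Real

theorem mul_log_div_sq_le {α D A B t w q : ℝ} (hα0 : 0 < α) (hα1 : α < 1) (hA : 0 ≤ A)
    (hB : 0 ≤ B) (hAB : ∀ V, 0 ≤ V → V ^ 2 ≤ A + B * exp (V - D)) (ht : 0 < t) (hw : 0 < w)
    (hq : 0 < q) (hrel : α * log (t / w) + (1 - α) * log (t / q) = (1 - α) * D) :
    t * log (t / w) ^ 2 ≤ 4 * exp (-2) * w + ((1 - α) / α) ^ 2 * (A * t + B * q) := by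
  set u := log (t / w)
  have hrest : 0 ≤ ((1 - α) / α) ^ 2 * (A * t + B * q) := by positivity
  have hwu : 0 ≤ 4 * exp (-2) * w := by positivity
  rcases le_or_gt u 0 with hu | hu
  · have htw : t = w * exp u := by rw [exp_log (div_pos ht hw)]; field_simp
    have : t * u ^ 2 ≤ 4 * exp (-2) * w := by
      calc t * u ^ 2 = w * (exp u * u ^ 2) := by rw [htw]; ring
        _ ≤ w * (4 * exp (-2)) :=
            mul_le_mul_of_nonneg_left (exp_mul_sq_le_of_nonpos hu) hw.le
        _ = 4 * exp (-2) * w := by ring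
    linarith
  · have hα1' : 0 < 1 - α := by linarith
    set V := α * u / (1 - α) with hVdef
    have hV : 0 ≤ V := by positivity
    have hVu : (1 - α) * V = α * u := by rw [hVdef]; field_simp
    have htq : log (t / q) = D - V :=
      mul_left_cancel₀ hα1'.ne' (by linear_combination hrel + hVu)
    have hq : q = t * exp (V - D) := by
      rw [show V - D = -log (t / q) by rw [htq]; ring, exp_neg, exp_log (div_pos ht hq)]
      field_simp
    have huV : u = (1 - α) / α * V := by field_simp; linarith
    calc t * u ^ 2 = ((1 - α) / α) ^ 2 * (t * V ^ 2) := by rw [huV]; ring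
      _ ≤ ((1 - α) / α) ^ 2 * (t * (A + B * exp (V - D))) := by gcongr; exact hAB V hV
      _ = ((1 - α) / α) ^ 2 * (A * t + B * q) := by rw [hq]; ring
      _ ≤ _ := by linarith

section Tilt

variable {Y : Type*} [Fintype Y] {α : ℝ} {W Q : Y → ℝ}

theorem tilt_one (W Q : Y → ℝ) : tilt 1 W Q = W := by
  ext y
  simp [tilt]

theorem tilt_eq_zero_of_eq_zero_or_eq_zero (hα0 : 0 < α) (hα1 : α < 1) {y : Y}
    (h : W y = 0 ∨ Q y = 0) : tilt α W Q y = 0 := by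
  rcases h with h | h <;> simp [tilt, h, zero_rpow, hα0.ne', sub_ne_zero.mpr hα1.ne']

theorem pos_sum_rpow_mul_rpow_of_renyiDivE_ne_top (hα1 : α ≠ 1) (h : renyiDivE α W Q ≠ ⊤) :
    0 < ∑ y, W y ^ α * Q y ^ (1 - α) := by
  by_contra hS
  simp [renyiDivE, hα1, hS] at h

theorem sum_tilt (hα1 : α ≠ 1) (hS : 0 < ∑ y, W y ^ α * Q y ^ (1 - α)) :
    ∑ y, tilt α W Q y = 1 := by
  have hexp : exp ((1 - α) * renyiDiv α W Q) = (∑ y, W y ^ α * Q y ^ (1 - α))⁻¹ := by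
    rw [renyiDiv, if_neg hα1, ← exp_log (inv_pos.mpr hS), log_inv]
    congr 1
    field_simp [sub_ne_zero.mpr hα1]
    ring
  simp only [tilt, mul_assoc, ← Finset.mul_sum, hexp, inv_mul_cancel₀ hS.ne']

theorem mul_log_tilt_div_add_mul_log_tilt_div {y : Y} (hW : 0 < W y) (hQ : 0 < Q y) :
    α * log (tilt α W Q y / W y) + (1 - α) * log (tilt α W Q y / Q y)
      = (1 - α) * renyiDiv α W Q := by
  have hWα := rpow_pos_of_pos hW α
  have hQα := rpow_pos_of_pos hQ (1 - α)
  rw [log_div (by unfold tilt; positivity) hW.ne', log_div (by unfold tilt; positivity) hQ.ne',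
    tilt, log_mul (by positivity) hQα.ne', log_mul (exp_pos _).ne' hWα.ne', log_exp,
    log_rpow hW, log_rpow hQ]
  ring

theorem tilt_mul_log_div_sq_le {A B : ℝ} (hα0 : 0 < α) (hα1 : α < 1) (hA : 0 ≤ A) (hB : 0 ≤ B)
    (hAB : ∀ V, 0 ≤ V → V ^ 2 ≤ A + B * exp (V - renyiDiv α W Q)) {y : Y} (hW : 0 ≤ W y)
    (hQ : 0 ≤ Q y) :
    tilt α W Q y * log (tilt α W Q y / W y) ^ 2
      ≤ 4 * exp (-2) * W y + ((1 - α) / α) ^ 2 * (A * tilt α W Q y + B * Q y) := by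
  by_cases h : W y = 0 ∨ Q y = 0
  · rw [tilt_eq_zero_of_eq_zero_or_eq_zero hα0 hα1 h, zero_mul, mul_zero, zero_add]
    positivity
  obtain ⟨hWy, hQy⟩ := not_or.mp h
  replace hWy := hW.lt_of_ne' hWy
  replace hQy := hQ.lt_of_ne' hQy
  exact mul_log_div_sq_le hα0 hα1 hA hB hAB (by unfold tilt; positivity) hWy hQy
    (mul_log_tilt_div_add_mul_log_tilt_div hWy hQy)

end Tilt

/-- second moment bound for the log-likelihood ratio of the tilted pmf
with respect to `W`. -/
theorem tilt_variance_bound_W {Y : Type*} [Fintype Y] (α : ℝ) (hα : α ∈ Set.Ioc (0:ℝ) 1)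
    (W Q : Y → ℝ) (hW : IsPMF W) (hQ : IsPMF Q) (hfin : renyiDivE α W Q ≠ ⊤) :
    ∑ y, tilt α W Q y * (Real.log (tilt α W Q y / W y)) ^ 2
      ≤ 4 * Real.exp (-2) + ((1 - α) / α) ^ 2 * (4 + (renyiDiv α W Q) ^ 2) := by
  obtain ⟨hα0, hα1⟩ := hα
  rcases hα1.lt_or_eq with hα1 | rfl
  swap
  · have hlog (x : ℝ) : log (x / x) = 0 := by by_cases hx : x = 0 <;> simp [hx]
    simp only [tilt_one, hlog, zero_pow two_ne_zero, mul_zero, Finset.sum_const_zero]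
    positivity
  have hS := pos_sum_rpow_mul_rpow_of_renyiDivE_ne_top hα1.ne hfin
  obtain ⟨A, B, hA, hB, hAB, hsq⟩ := exists_sq_le_add_mul_exp (renyiDiv α W Q)
  calc ∑ y, tilt α W Q y * log (tilt α W Q y / W y) ^ 2
      ≤ ∑ y, (4 * exp (-2) * W y + ((1 - α) / α) ^ 2 * (A * tilt α W Q y + B * Q y)) :=
        Finset.sum_le_sum fun y _ => tilt_mul_log_div_sq_le hα0 hα1 hA hB hsq (hW.1 y) (hQ.1 y)
    _ = 4 * exp (-2) + ((1 - α) / α) ^ 2 * (A + B) := by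
        simp only [Finset.sum_add_distrib, ← Finset.mul_sum, hW.2, hQ.2, sum_tilt hα1.ne hS]
        ring
    _ ≤ 4 * exp (-2) + ((1 - α) / α) ^ 2 * (4 + renyiDiv α W Q ^ 2) := by gcongr
end

section
/- For any stochastic matrix W from a finite set X to pmfs on a finite set Y, the order-α Rényi capacity C_α(W) := sup_P I_α(P;W) is nondecreasing and continuous in α on (0,1]. -/
open Real MeasureTheory Filter

/-!
For a fixed input distribution `P`, Sibson's identity exhibits `I_α(P;W)` as the minimum over
output distributions `Q` of the Rényi divergence `D_α(P ⊛ W ‖ P ⊗ Q)`: Hölder's inequality gives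
`I_α ≤ D_α(P ⊛ W ‖ P ⊗ Q)`, with equality at the Rényi mean `q_{α,P}`. Since `D_α` is
nondecreasing in the order (Jensen), for `α ≤ β`
`I_α ≤ D_α(P ⊛ W ‖ P ⊗ q_{β,P}) ≤ D_β(P ⊛ W ‖ P ⊗ q_{β,P}) = I_β`,
and taking suprema shows that `C_α` is nondecreasing.

For `α ≠ 1`, `I_α = α / (α - 1) * log S_α` with `S_α = ∑_y (∑_x P(x) W(y|x)^α)^{1/α}`, a sum of
power means, so `S_α` is nondecreasing in `α` and `(1 - α) / α * C_α = sup_P (-log S_α)` is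
nonincreasing on `(0,1)`. Squeezed between these two monotonicity properties, `C_α` is continuous
on `(0,1)`. At `α = 1`, `S_1 = 1` and `S'_1 = I_1`, so every `I_α(P;W)` is continuous at `1`; hence
`C_α` is lower semicontinuous there as a supremum, and upper semicontinuous by monotonicity.
-/

open Set Topology

lemma div_rpow_one_sub_eq {a : ℝ} (ha : 0 < a) (γ : ℝ) : a / a ^ (1 - γ) = a ^ γ := by
  have h := rpow_sub ha 1 (1 - γ)
  rwa [rpow_one, sub_sub_cancel, eq_comm] at h

lemma mul_div_rpow_one_sub {a b γ : ℝ} (ha : 0 ≤ a) (hb : 0 ≤ b) (hγ : γ ≠ 0) :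
    a * (b / a) ^ (1 - γ) = a ^ γ * b ^ (1 - γ) := by
  rcases ha.eq_or_lt with rfl | ha
  · simp [zero_rpow hγ]
  · rw [div_rpow hb ha.le, ← div_rpow_one_sub_eq ha γ]
    ring

lemma rpow_mean_le_rpow_mean {ι : Type*} {s : Finset ι} {w z : ι → ℝ} (hw : ∀ i ∈ s, 0 ≤ w i)
    (hw₁ : ∑ i ∈ s, w i = 1) (hz : ∀ i ∈ s, 0 ≤ z i) {p q : ℝ} (hp : 0 < p) (hpq : p ≤ q) :
    (∑ i ∈ s, w i * z i ^ p) ^ p⁻¹ ≤ (∑ i ∈ s, w i * z i ^ q) ^ q⁻¹ := by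
  have hq : 0 < q := hp.trans_le hpq
  have hJ := rpow_arith_mean_le_arith_mean_rpow s w (fun i => z i ^ p) hw hw₁
    (fun i hi => rpow_nonneg (hz i hi) p) ((one_le_div hp).2 hpq)
  have hexp : ∀ i ∈ s, (z i ^ p) ^ (q / p) = z i ^ q := fun i hi => by
    rw [← rpow_mul (hz i hi), mul_div_cancel₀ q hp.ne']
  rw [Finset.sum_congr rfl fun i hi => congrArg (w i * ·) (hexp i hi)] at hJ
  have hsum : 0 ≤ ∑ i ∈ s, w i * z i ^ p :=
    Finset.sum_nonneg fun i hi => mul_nonneg (hw i hi) (rpow_nonneg (hz i hi) p)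
  calc (∑ i ∈ s, w i * z i ^ p) ^ p⁻¹ = ((∑ i ∈ s, w i * z i ^ p) ^ (q / p)) ^ q⁻¹ := by
        rw [← rpow_mul hsum]
        field_simp
    _ ≤ _ := rpow_le_rpow (rpow_nonneg hsum _) hJ (inv_nonneg.2 hq.le)

lemma hasDerivAt_const_rpow_one {a : ℝ} (ha : 0 ≤ a) :
    HasDerivAt (fun t : ℝ => a ^ t) (-negMulLog a) 1 := by
  rcases ha.eq_or_lt with rfl | ha
  · have hev : (fun t : ℝ => (0 : ℝ) ^ t) =ᶠ[𝓝 1] fun _ => 0 := by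
      filter_upwards [eventually_ne_nhds one_ne_zero] with t ht using zero_rpow ht
    simpa using (hasDerivAt_const (1 : ℝ) (0 : ℝ)).congr_of_eventuallyEq hev
  · simpa [negMulLog] using (hasStrictDerivAt_const_rpow ha 1).hasDerivAt

lemma continuousWithinAt_of_monotoneOn_of_antitoneOn_mul {f g : ℝ → ℝ} {s : Set ℝ} {x : ℝ}
    (hf : MonotoneOn f s) (hgf : AntitoneOn (fun y => g y * f y) s) (hg : ∀ y ∈ s, 0 < g y)
    (hgx : ContinuousWithinAt g s x) (hx : x ∈ s) : ContinuousWithinAt f s x := by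
  -- `f y` lies between `f x` and `g x * f x / g y`, and the latter tends to `f x`
  have hbound : ∀ y ∈ s, dist (f y) (f x) ≤ dist (g x * f x / g y) (f x) := by
    intro y hy
    refine abs_sub_left_of_mem_uIcc ?_
    rcases le_total x y with hxy | hyx
    · exact Icc_subset_uIcc ⟨hf hx hy hxy, (le_div_iff₀' (hg y hy)).2 (hgf hx hy hxy)⟩
    · exact Icc_subset_uIcc' ⟨(div_le_iff₀' (hg y hy)).2 (hgf hy hx hyx), hf hy hx hyx⟩
  have hlim : Tendsto (fun y => g x * f x / g y) (𝓝[s] x) (𝓝 (f x)) := by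
    have h := (tendsto_const_nhds (x := g x * f x)).div hgx (hg x hx).ne'
    rwa [mul_div_cancel_left₀ _ (hg x hx).ne'] at h
  exact tendsto_iff_dist_tendsto_zero.2 (squeeze_zero' (Eventually.of_forall fun _ => dist_nonneg)
    (eventually_nhdsWithin_of_forall hbound) (tendsto_iff_dist_tendsto_zero.1 hlim))

lemma IsPMF.exists_pos {ι : Type*} [Fintype ι] {μ : ι → ℝ} (hμ : IsPMF μ) : ∃ i, 0 < μ i := by
  by_contra! h
  linarith [hμ.2, Finset.sum_nonpos (s := Finset.univ) fun i _ => h i]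

lemma sum_negMulLog_le_log_card {ι : Type*} [Fintype ι] {q : ι → ℝ} (hq : IsPMF q) :
    ∑ i, negMulLog (q i) ≤ log (Fintype.card ι) := by
  obtain ⟨i, -⟩ := hq.exists_pos
  set n : ℝ := (Fintype.card ι : ℝ)
  have hn : 0 < n := Nat.cast_pos.2 (Fintype.card_pos_iff.2 ⟨i⟩)
  have hJ := concaveOn_negMulLog.le_map_sum (t := Finset.univ) (w := fun _ => n⁻¹) (p := q)
    (fun _ _ => by positivity) (by simp [n, hn.ne']) (fun i _ => hq.1 i)
  have hn' : negMulLog n⁻¹ = n⁻¹ * log n := by simp [negMulLog, log_inv]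
  simp only [smul_eq_mul, ← Finset.mul_sum, hq.2, mul_one, hn'] at hJ
  exact le_of_mul_le_mul_left hJ (inv_pos.2 hn)

section RenyiDivergence

variable {ι : Type*} [Fintype ι] {μ ν : ι → ℝ}

lemma sum_mul_div_rpow_one_sub (hμ : ∀ i, 0 ≤ μ i) (hν : ∀ i, 0 ≤ ν i) {γ : ℝ} (hγ : γ ≠ 0) :
    ∑ i, μ i * (ν i / μ i) ^ (1 - γ) = ∑ i, μ i ^ γ * ν i ^ (1 - γ) :=
  Finset.sum_congr rfl fun i _ => mul_div_rpow_one_sub (hμ i) (hν i) hγ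

lemma sum_rpow_mul_rpow_pos_s7 (hμ : IsPMF μ) (hν : ∀ i, 0 ≤ ν i) (hac : ∀ i, ν i = 0 → μ i = 0)
    (α : ℝ) : 0 < ∑ i, μ i ^ α * ν i ^ (1 - α) := by
  obtain ⟨i, hi⟩ := hμ.exists_pos
  have hνi : 0 < ν i := (hν i).lt_of_ne' fun h => hi.ne' (hac i h)
  refine Finset.sum_pos' (fun j _ => ?_) ⟨i, Finset.mem_univ i, by positivity⟩
  have := hμ.1 j
  have := hν j
  positivity

lemma renyiDiv_le_renyiDiv (hμ : IsPMF μ) (hν : ∀ i, 0 ≤ ν i) (hac : ∀ i, ν i = 0 → μ i = 0)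
    {α β : ℝ} (hα : 0 < α) (hαβ : α ≤ β) (hβ : β < 1) : renyiDiv α μ ν ≤ renyiDiv β μ ν := by
  set θ := (1 - α) / (1 - β) with hθdef
  have hθ : 1 ≤ θ := (one_le_div (by linarith)).2 (by linarith)
  have hratio : ∀ i, 0 ≤ ν i / μ i := fun i => div_nonneg (hν i) (hμ.1 i)
  -- Jensen for `t ↦ t ^ θ`, applied to `(ν / μ) ^ (1 - β)` under `μ`
  have hJ := rpow_arith_mean_le_arith_mean_rpow Finset.univ μ (fun i => (ν i / μ i) ^ (1 - β))
    (fun i _ => hμ.1 i) hμ.2 (fun i _ => rpow_nonneg (hratio i) _) hθ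
  have hexp : (1 - β) * θ = 1 - α := by rw [hθdef]; field_simp [show 1 - β ≠ 0 by linarith]
  simp only [← rpow_mul (hratio _), hexp, sum_mul_div_rpow_one_sub hμ.1 hν hα.ne',
    sum_mul_div_rpow_one_sub hμ.1 hν (hα.trans_le hαβ).ne'] at hJ
  have hpos := sum_rpow_mul_rpow_pos_s7 hμ hν hac β
  have hlog : θ * log (∑ i, μ i ^ β * ν i ^ (1 - β)) ≤ log (∑ i, μ i ^ α * ν i ^ (1 - α)) := by
    rw [← log_rpow hpos]
    exact log_le_log (rpow_pos_of_pos hpos θ) hJ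
  have hcoef : (β - 1)⁻¹ = (α - 1)⁻¹ * θ := by
    rw [hθdef]
    field_simp [show α - 1 ≠ 0 by linarith, show 1 - β ≠ 0 by linarith, show β - 1 ≠ 0 by linarith]
    ring
  rw [renyiDiv, renyiDiv, if_neg (by linarith), if_neg (by linarith), hcoef, mul_assoc]
  exact mul_le_mul_of_nonpos_left hlog (inv_nonpos.2 (by linarith))

lemma renyiDiv_le_renyiDiv_one (hμ : IsPMF μ) (hν : ∀ i, 0 ≤ ν i) (hac : ∀ i, ν i = 0 → μ i = 0)
    {α : ℝ} (hα : 0 < α) (hα1 : α < 1) : renyiDiv α μ ν ≤ renyiDiv 1 μ ν := by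
  -- Jensen for `exp`, applied to `(1 - α) * log (ν / μ)` under `μ`
  have hJ := convexOn_exp.map_sum_le (t := Finset.univ) (w := μ)
    (p := fun i => (1 - α) * log (ν i / μ i)) (fun i _ => hμ.1 i) hμ.2 (fun _ _ => Set.mem_univ _)
  have hterm : ∀ i, μ i * exp ((1 - α) * log (ν i / μ i)) = μ i ^ α * ν i ^ (1 - α) := by
    intro i
    rcases (hμ.1 i).eq_or_lt with hμi | hμi
    · simp [← hμi, zero_rpow hα.ne']
    · have hνi : 0 < ν i := (hν i).lt_of_ne' fun h => hμi.ne' (hac i h)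
      rw [mul_comm (1 - α), ← rpow_def_of_pos (div_pos hνi hμi)]
      exact mul_div_rpow_one_sub hμi.le hνi.le hα.ne'
  have hmean : ∑ i, μ i * ((1 - α) * log (ν i / μ i)) = (α - 1) * renyiDiv 1 μ ν := by
    simp only [renyiDiv, if_true, Finset.mul_sum, ← inv_div (μ _), log_inv]
    exact Finset.sum_congr rfl fun i _ => by ring
  simp only [smul_eq_mul, hterm, hmean] at hJ
  have hpos := sum_rpow_mul_rpow_pos_s7 hμ hν hac α
  rw [renyiDiv, if_neg hα1.ne, ← div_eq_inv_mul, div_le_iff_of_neg (by linarith), mul_comm,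
    le_log_iff_exp_le hpos]
  exact hJ

lemma renyiDiv_monotoneOn (hμ : IsPMF μ) (hν : ∀ i, 0 ≤ ν i) (hac : ∀ i, ν i = 0 → μ i = 0) :
    MonotoneOn (fun α => renyiDiv α μ ν) (Ioc 0 1) := by
  intro α hα β hβ hαβ
  rcases hβ.2.lt_or_eq with hβ1 | rfl
  · exact renyiDiv_le_renyiDiv hμ hν hac hα.1 hαβ hβ1
  rcases hα.2.lt_or_eq with hα1 | rfl
  · exact renyiDiv_le_renyiDiv_one hμ hν hac hα.1 hα1
  · rfl

end RenyiDivergence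

section Channel

variable {X Y : Type*} [Fintype X] [Fintype Y] {P : X → ℝ} {W : X → Y → ℝ}

def jointDist (P : X → ℝ) (W : X → Y → ℝ) : X × Y → ℝ := fun p => P p.1 * W p.1 p.2

def prodDist (P : X → ℝ) (Q : Y → ℝ) : X × Y → ℝ := fun p => P p.1 * Q p.2

def outputDist (P : X → ℝ) (W : X → Y → ℝ) (y : Y) : ℝ := ∑ x, P x * W x y

noncomputable def marginalRpow (α : ℝ) (P : X → ℝ) (W : X → Y → ℝ) (y : Y) : ℝ :=
  ∑ x, P x * W x y ^ α

noncomputable def renyiMeanNorm (α : ℝ) (P : X → ℝ) (W : X → Y → ℝ) : ℝ :=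
  ∑ y, marginalRpow α P W y ^ α⁻¹

lemma renyiInfo_of_ne_one {α : ℝ} (hα : α ≠ 1) :
    renyiInfo α P W = α / (α - 1) * log (renyiMeanNorm α P W) :=
  if_neg hα

lemma mul_renyiInfo_eq_neg_log {α : ℝ} (hα₀ : α ≠ 0) (hα₁ : α ≠ 1) :
    (1 - α) / α * renyiInfo α P W = -log (renyiMeanNorm α P W) := by
  rw [renyiInfo_of_ne_one hα₁]
  field_simp [sub_ne_zero.2 hα₁]
  ring

lemma renyiMean_eq_div (α : ℝ) :
    renyiMean α P W = fun y => marginalRpow α P W y ^ α⁻¹ / renyiMeanNorm α P W :=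
  rfl

omit [Fintype Y] in
lemma marginalRpow_one : marginalRpow 1 P W = outputDist P W := by
  ext y
  simp [marginalRpow, outputDist]

variable (hP : IsPMF P) (hW : ∀ x, IsPMF (W x))
include hP hW

lemma isPMF_jointDist : IsPMF (jointDist P W) := by
  refine ⟨fun p => mul_nonneg (hP.1 _) ((hW _).1 _), ?_⟩
  simp [jointDist, Fintype.sum_prod_type, ← Finset.mul_sum, (hW _).2, hP.2]

lemma isPMF_outputDist : IsPMF (outputDist P W) := by
  refine ⟨fun y => Finset.sum_nonneg fun x _ => mul_nonneg (hP.1 x) ((hW x).1 y), ?_⟩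
  simpa [outputDist, jointDist, Fintype.sum_prod_type, Finset.sum_comm (γ := Y)] using
    (isPMF_jointDist hP hW).2

lemma marginalRpow_nonneg (α : ℝ) (y : Y) : 0 ≤ marginalRpow α P W y :=
  Finset.sum_nonneg fun x _ => mul_nonneg (hP.1 x) (rpow_nonneg ((hW x).1 y) α)

lemma marginalRpow_eq_zero_iff {α : ℝ} (hα : 0 < α) {y : Y} :
    marginalRpow α P W y = 0 ↔ ∀ x, P x * W x y = 0 := by
  rw [marginalRpow, Finset.sum_eq_zero_iff_of_nonneg fun x _ =>
    mul_nonneg (hP.1 x) (rpow_nonneg ((hW x).1 y) α)]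
  simp only [Finset.mem_univ, true_implies, mul_eq_zero, rpow_eq_zero ((hW _).1 y) hα.ne']

lemma renyiMeanNorm_pos {α : ℝ} (hα : 0 < α) : 0 < renyiMeanNorm α P W := by
  obtain ⟨⟨x, y⟩, hxy⟩ := (isPMF_jointDist hP hW).exists_pos
  have hT : 0 < marginalRpow α P W y := (marginalRpow_nonneg hP hW α y).lt_of_ne' fun h =>
    hxy.ne' ((marginalRpow_eq_zero_iff hP hW hα).1 h x)
  exact Finset.sum_pos' (fun y _ => rpow_nonneg (marginalRpow_nonneg hP hW α y) _)
    ⟨y, Finset.mem_univ y, rpow_pos_of_pos hT _⟩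

lemma renyiMeanNorm_one : renyiMeanNorm 1 P W = 1 := by
  simpa [renyiMeanNorm, marginalRpow_one] using (isPMF_outputDist hP hW).2

lemma renyiMeanNorm_mono {α β : ℝ} (hα : 0 < α) (hαβ : α ≤ β) :
    renyiMeanNorm α P W ≤ renyiMeanNorm β P W :=
  Finset.sum_le_sum fun y _ => rpow_mean_le_rpow_mean (fun x _ => hP.1 x) hP.2
    (fun x _ => (hW x).1 y) hα hαβ

lemma sum_jointDist_rpow_mul_prodDist_rpow {Q : Y → ℝ} (hQ : ∀ y, 0 ≤ Q y) (α : ℝ) :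
    ∑ p, jointDist P W p ^ α * prodDist P Q p ^ (1 - α) =
      ∑ y, marginalRpow α P W y * Q y ^ (1 - α) := by
  have hterm : ∀ x y,
      (P x * W x y) ^ α * (P x * Q y) ^ (1 - α) = P x * W x y ^ α * Q y ^ (1 - α) := by
    intro x y
    rw [mul_rpow (hP.1 x) ((hW x).1 y), mul_rpow (hP.1 x) (hQ y)]
    have : P x ^ α * P x ^ (1 - α) = P x := by
      rw [← rpow_add' (hP.1 x) (by norm_num), add_sub_cancel, rpow_one]
    rw [mul_mul_mul_comm, this, mul_assoc]
  simp only [jointDist, prodDist, Fintype.sum_prod_type, hterm, marginalRpow, Finset.sum_mul]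
  exact Finset.sum_comm

lemma renyiInfo_le_renyiDiv {α : ℝ} (hα : 0 < α) (hα1 : α < 1) {Q : Y → ℝ} (hQ : IsPMF Q)
    (hac : ∀ p, prodDist P Q p = 0 → jointDist P W p = 0) :
    renyiInfo α P W ≤ renyiDiv α (jointDist P W) (prodDist P Q) := by
  have hpos := sum_rpow_mul_rpow_pos_s7 (ν := prodDist P Q) (isPMF_jointDist hP hW)
    (fun p => mul_nonneg (hP.1 p.1) (hQ.1 p.2)) hac α
  rw [sum_jointDist_rpow_mul_prodDist_rpow hP hW hQ.1] at hpos
  have hH := inner_le_Lp_mul_Lq_of_nonneg Finset.univ (HolderConjugate.inv_one_sub_inv hα hα1)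
    (fun y _ => marginalRpow_nonneg hP hW α y) (fun y _ => rpow_nonneg (hQ.1 y) (1 - α))
  have hQ' : ∀ y, (Q y ^ (1 - α)) ^ (1 - α)⁻¹ = Q y := fun y => by
    rw [← rpow_mul (hQ.1 y), mul_inv_cancel₀ (by linarith), rpow_one]
  simp only [hQ', hQ.2, one_div, inv_inv, one_rpow, mul_one] at hH
  have hS := renyiMeanNorm_pos hP hW hα
  rw [renyiDiv, if_neg hα1.ne, sum_jointDist_rpow_mul_prodDist_rpow hP hW hQ.1,
    renyiInfo_of_ne_one hα1.ne, div_eq_inv_mul, mul_assoc, ← log_rpow hS]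
  exact mul_le_mul_of_nonpos_left (log_le_log hpos hH) (inv_nonpos.2 (by linarith))

lemma isPMF_renyiMean {α : ℝ} (hα : 0 < α) : IsPMF (renyiMean α P W) := by
  have hS := renyiMeanNorm_pos hP hW hα
  refine ⟨fun y => div_nonneg (rpow_nonneg (marginalRpow_nonneg hP hW α y) _) hS.le, ?_⟩
  rw [renyiMean_eq_div, ← Finset.sum_div]
  exact div_self hS.ne'

lemma jointDist_eq_zero_of_prodDist_renyiMean_eq_zero {α : ℝ} (hα : 0 < α) (p : X × Y)
    (hp : prodDist P (renyiMean α P W) p = 0) : jointDist P W p = 0 := by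
  rcases mul_eq_zero.1 hp with hPx | hq
  · simp [jointDist, hPx]
  · rw [renyiMean_eq_div, div_eq_zero_iff, rpow_eq_zero (marginalRpow_nonneg hP hW α _)
      (inv_ne_zero hα.ne'), marginalRpow_eq_zero_iff hP hW hα] at hq
    exact hq.resolve_right (renyiMeanNorm_pos hP hW hα).ne' p.1

lemma sum_marginalRpow_mul_renyiMean_rpow {α : ℝ} (hα : 0 < α) :
    ∑ y, marginalRpow α P W y * renyiMean α P W y ^ (1 - α) = renyiMeanNorm α P W ^ α := by
  have hS := renyiMeanNorm_pos hP hW hα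
  have hterm : ∀ y, marginalRpow α P W y * renyiMean α P W y ^ (1 - α) =
      marginalRpow α P W y ^ α⁻¹ / renyiMeanNorm α P W ^ (1 - α) := fun y => by
    have hT := marginalRpow_nonneg hP hW α y
    have hexp : 1 + α⁻¹ * (1 - α) = α⁻¹ := by
      field_simp
      ring
    rw [renyiMean_eq_div, div_rpow (rpow_nonneg hT _) hS.le, ← rpow_mul hT, mul_div_assoc',
      ← rpow_one_add' hT (by rw [hexp]; exact inv_ne_zero hα.ne'), hexp]
  rw [Finset.sum_congr rfl fun y _ => hterm y, ← Finset.sum_div]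
  exact div_rpow_one_sub_eq hS α

lemma renyiDiv_jointDist_prodDist_renyiMean {α : ℝ} (hα : 0 < α) (hα1 : α < 1) :
    renyiDiv α (jointDist P W) (prodDist P (renyiMean α P W)) = renyiInfo α P W := by
  rw [renyiDiv, if_neg hα1.ne,
    sum_jointDist_rpow_mul_prodDist_rpow hP hW (isPMF_renyiMean hP hW hα).1,
    sum_marginalRpow_mul_renyiMean_rpow hP hW hα, log_rpow (renyiMeanNorm_pos hP hW hα),
    renyiInfo_of_ne_one hα1.ne]
  ring

lemma renyiMean_one : renyiMean 1 P W = outputDist P W := by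
  ext y
  simp [renyiMean_eq_div, renyiMeanNorm_one hP hW, marginalRpow_one]

omit hW in
lemma renyiDiv_one_jointDist_prodDist_outputDist :
    renyiDiv 1 (jointDist P W) (prodDist P (outputDist P W)) = renyiInfo 1 P W := by
  simp only [renyiDiv, renyiInfo, if_true, Fintype.sum_prod_type, jointDist, prodDist,
    Finset.mul_sum]
  refine Finset.sum_congr rfl fun x _ => Finset.sum_congr rfl fun y _ => ?_
  rcases (hP.1 x).eq_or_lt with hPx | hPx
  · simp [← hPx]
  · rw [mul_div_mul_left _ _ hPx.ne', mul_assoc]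
    rfl

lemma renyiInfo_monotoneOn : MonotoneOn (fun α => renyiInfo α P W) (Ioc 0 1) := by
  intro α hα β hβ hαβ
  rcases hαβ.lt_or_eq with hαβ | rfl
  · have hac := jointDist_eq_zero_of_prodDist_renyiMean_eq_zero hP hW hβ.1
    have hsibson : renyiDiv β (jointDist P W) (prodDist P (renyiMean β P W)) = renyiInfo β P W := by
      rcases hβ.2.lt_or_eq with hβ1 | rfl
      · exact renyiDiv_jointDist_prodDist_renyiMean hP hW hβ.1 hβ1
      · rw [renyiMean_one hP hW, renyiDiv_one_jointDist_prodDist_outputDist hP]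
    calc renyiInfo α P W
        ≤ renyiDiv α (jointDist P W) (prodDist P (renyiMean β P W)) :=
          renyiInfo_le_renyiDiv hP hW hα.1 (hαβ.trans_le hβ.2) (isPMF_renyiMean hP hW hβ.1) hac
      _ ≤ renyiDiv β (jointDist P W) (prodDist P (renyiMean β P W)) :=
          renyiDiv_monotoneOn (isPMF_jointDist hP hW)
            (fun p => mul_nonneg (hP.1 p.1) ((isPMF_renyiMean hP hW hβ.1).1 p.2)) hac hα hβ hαβ.le
      _ = renyiInfo β P W := hsibson
  · rfl

lemma mul_le_outputDist (x : X) (y : Y) : P x * W x y ≤ outputDist P W y :=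
  Finset.single_le_sum (f := fun x => P x * W x y) (fun x _ => mul_nonneg (hP.1 x) ((hW x).1 y))
    (Finset.mem_univ x)

lemma renyiInfo_one_eq : renyiInfo 1 P W =
    ∑ y, negMulLog (outputDist P W y) - ∑ x, P x * ∑ y, negMulLog (W x y) := by
  have hterm : ∀ x y, P x * (W x y * log (W x y / outputDist P W y)) =
      P x * W x y * log (W x y) - P x * W x y * log (outputDist P W y) := by
    intro x y
    by_cases h : P x * W x y = 0
    · rcases mul_eq_zero.1 h with h | h <;> simp [h]
    · have hPW : 0 < P x * W x y := (mul_nonneg (hP.1 x) ((hW x).1 y)).lt_of_ne' h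
      rw [log_div (right_ne_zero_of_mul h) (hPW.trans_le (mul_le_outputDist hP hW x y)).ne']
      ring
  have hcond : ∑ x, ∑ y, P x * W x y * log (W x y) = -∑ x, P x * ∑ y, negMulLog (W x y) := by
    simp [negMulLog, Finset.mul_sum, mul_assoc]
  have hout : ∑ x, ∑ y, P x * W x y * log (outputDist P W y) =
      -∑ y, negMulLog (outputDist P W y) := by
    rw [Finset.sum_comm]
    simp [negMulLog, ← Finset.sum_mul, outputDist]
  have hI : renyiInfo 1 P W = ∑ x, P x * ∑ y, W x y * log (W x y / outputDist P W y) := if_pos rfl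
  simp only [hI, Finset.mul_sum, hterm, Finset.sum_sub_distrib, hcond, hout]
  ring

lemma renyiInfo_one_le_log_card : renyiInfo 1 P W ≤ log (Fintype.card Y) := by
  have hW_le_one : ∀ x y, W x y ≤ 1 := fun x y => (hW x).2 ▸
    Finset.single_le_sum (fun y _ => (hW x).1 y) (Finset.mem_univ y)
  have hcond : 0 ≤ ∑ x, P x * ∑ y, negMulLog (W x y) :=
    Finset.sum_nonneg fun x _ => mul_nonneg (hP.1 x) (Finset.sum_nonneg fun y _ =>
      negMulLog_nonneg ((hW x).1 y) (hW_le_one x y))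
  rw [renyiInfo_one_eq hP hW]
  linarith [sum_negMulLog_le_log_card (isPMF_outputDist hP hW)]

lemma renyiInfo_le_log_card {α : ℝ} (hα : α ∈ Ioc 0 1) :
    renyiInfo α P W ≤ log (Fintype.card Y) :=
  (renyiInfo_monotoneOn hP hW hα ⟨one_pos, le_rfl⟩ hα.2).trans (renyiInfo_one_le_log_card hP hW)

omit [Fintype Y] hP hW in
lemma hasDerivAt_marginalRpow_one (y : Y) (hW₀ : ∀ x, 0 ≤ W x y) :
    HasDerivAt (fun α => marginalRpow α P W y) (-∑ x, P x * negMulLog (W x y)) 1 := by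
  simpa [marginalRpow, mul_neg, Finset.sum_neg_distrib] using
    HasDerivAt.fun_sum fun x _ => (hasDerivAt_const_rpow_one (hW₀ x)).const_mul (P x)

lemma hasDerivAt_marginalRpow_rpow_inv_one (y : Y) :
    HasDerivAt (fun α => marginalRpow α P W y ^ α⁻¹)
      (negMulLog (outputDist P W y) - ∑ x, P x * negMulLog (W x y)) 1 := by
  have hT := hasDerivAt_marginalRpow_one (P := P) y fun x => (hW x).1 y
  rcases (marginalRpow_nonneg hP hW 1 y).eq_or_lt with h0 | hpos
  · -- no mass reaches `y`, and the term vanishes identically for `α > 0`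
    have hzero := (marginalRpow_eq_zero_iff hP hW one_pos).1 h0.symm
    have hev : (fun α => marginalRpow α P W y ^ α⁻¹) =ᶠ[𝓝 1] fun _ => 0 := by
      filter_upwards [lt_mem_nhds one_pos] with α hα
      rw [(marginalRpow_eq_zero_iff hP hW hα).2 hzero, zero_rpow (inv_ne_zero hα.ne')]
    have hterm : ∀ x, P x * negMulLog (W x y) = 0 := fun x => by
      rcases mul_eq_zero.1 (hzero x) with h | h <;> simp [h]
    rw [← marginalRpow_one, ← h0]
    simpa [hterm] using (hasDerivAt_const (1 : ℝ) (0 : ℝ)).congr_of_eventuallyEq hev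
  · convert hT.rpow (hasDerivAt_inv one_ne_zero) hpos using 1
    simp only [inv_one, sub_self, rpow_zero, rpow_one, one_pow, mul_one, marginalRpow_one, negMulLog]
    ring

lemma hasDerivAt_renyiMeanNorm_one :
    HasDerivAt (fun α => renyiMeanNorm α P W) (renyiInfo 1 P W) 1 := by
  refine (HasDerivAt.fun_sum (u := Finset.univ) fun y _ =>
    hasDerivAt_marginalRpow_rpow_inv_one hP hW y).congr_deriv ?_
  rw [renyiInfo_one_eq hP hW, Finset.sum_sub_distrib]
  simp_rw [Finset.mul_sum]
  rw [Finset.sum_comm (s := Finset.univ (α := X))]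

lemma continuousAt_renyiInfo_one : ContinuousAt (fun α => renyiInfo α P W) 1 := by
  have hd := (hasDerivAt_renyiMeanNorm_one hP hW).log (by simp [renyiMeanNorm_one hP hW])
  rw [renyiMeanNorm_one hP hW, div_one, hasDerivAt_iff_tendsto_slope] at hd
  -- `I_α = α * slope (log ∘ renyiMeanNorm) 1 α`, since `renyiMeanNorm 1 = 1`
  have hlim := (tendsto_id.mono_left nhdsWithin_le_nhds).mul hd
  rw [one_mul] at hlim
  rw [← continuousWithinAt_compl_self, ContinuousWithinAt]
  refine hlim.congr' (eventually_nhdsWithin_of_forall fun α (hα : α ≠ 1) => ?_)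
  simp only [id_eq, slope_def_field, renyiMeanNorm_one hP hW, log_one, sub_zero,
    renyiInfo_of_ne_one hα]
  ring

end Channel

section Capacity

variable {X Y : Type*} [Fintype X] [Fintype Y] {W : X → Y → ℝ}

lemma renyiCap_eq_iSup (α : ℝ) (W : X → Y → ℝ) :
    renyiCap α W = ⨆ P : {P : X → ℝ // IsPMF P}, renyiInfo α P W := by
  rw [renyiCap, iSup]
  congr 1
  ext c
  simp [eq_comm]

lemma isPMF_uniform [Nonempty X] : IsPMF fun _ : X => (Fintype.card X : ℝ)⁻¹ :=
  ⟨fun _ => by positivity, by simp⟩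

instance [Nonempty X] : Nonempty {P : X → ℝ // IsPMF P} := ⟨⟨_, isPMF_uniform⟩⟩

variable (hW : ∀ x, IsPMF (W x))
include hW

lemma bddAbove_range_renyiInfo {α : ℝ} (hα : α ∈ Ioc 0 1) :
    BddAbove (range fun P : {P : X → ℝ // IsPMF P} => renyiInfo α P W) :=
  ⟨log (Fintype.card Y), forall_mem_range.2 fun P => renyiInfo_le_log_card P.2 hW hα⟩

lemma renyiInfo_le_renyiCap {α : ℝ} (hα : α ∈ Ioc 0 1) {P : X → ℝ} (hP : IsPMF P) :
    renyiInfo α P W ≤ renyiCap α W := by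
  rw [renyiCap_eq_iSup]
  exact le_ciSup (bddAbove_range_renyiInfo hW hα) ⟨P, hP⟩

variable [Nonempty X]

lemma renyiCap_monotoneOn : MonotoneOn (fun α => renyiCap α W) (Ioc 0 1) := by
  intro α hα β hβ hαβ
  show renyiCap α W ≤ renyiCap β W
  rw [renyiCap_eq_iSup α]
  exact ciSup_le fun P =>
    (renyiInfo_monotoneOn P.2 hW hα hβ hαβ).trans (renyiInfo_le_renyiCap hW hβ P.2)

lemma antitoneOn_mul_renyiCap : AntitoneOn (fun α => (1 - α) / α * renyiCap α W) (Ioo 0 1) := by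
  intro α hα β hβ hαβ
  have hgβ : 0 < (1 - β) / β := div_pos (sub_pos.2 hβ.2) hβ.1
  have hgα : 0 ≤ (1 - α) / α := (div_pos (sub_pos.2 hα.2) hα.1).le
  show (1 - β) / β * renyiCap β W ≤ (1 - α) / α * renyiCap α W
  rw [← le_div_iff₀' hgβ, renyiCap_eq_iSup β]
  refine ciSup_le fun P => (le_div_iff₀' hgβ).2 ?_
  calc (1 - β) / β * renyiInfo β P W = -log (renyiMeanNorm β P W) :=
        mul_renyiInfo_eq_neg_log hβ.1.ne' hβ.2.ne
    _ ≤ -log (renyiMeanNorm α P W) := neg_le_neg (log_le_log (renyiMeanNorm_pos P.2 hW hα.1)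
        (renyiMeanNorm_mono P.2 hW hα.1 hαβ))
    _ = (1 - α) / α * renyiInfo α P W := (mul_renyiInfo_eq_neg_log hα.1.ne' hα.2.ne).symm
    _ ≤ (1 - α) / α * renyiCap α W :=
        mul_le_mul_of_nonneg_left (renyiInfo_le_renyiCap hW (Ioo_subset_Ioc_self hα) P.2) hgα

lemma continuousOn_renyiCap_Ioo : ContinuousOn (fun α => renyiCap α W) (Ioo 0 1) := fun _ hγ =>
  continuousWithinAt_of_monotoneOn_of_antitoneOn_mul
    ((renyiCap_monotoneOn hW).mono Ioo_subset_Ioc_self) (antitoneOn_mul_renyiCap hW)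
    (fun _ hα => div_pos (sub_pos.2 hα.2) hα.1)
    ((continuousAt_const.sub continuousAt_id).div continuousAt_id hγ.1.ne').continuousWithinAt hγ

lemma continuousWithinAt_renyiCap_one :
    ContinuousWithinAt (fun α => renyiCap α W) (Ioc 0 1) 1 := by
  refine continuousWithinAt_iff_lower_upperSemicontinuousWithinAt.2 ⟨?_, fun c hc => ?_⟩
  · simp only [renyiCap_eq_iSup]
    exact lowerSemicontinuousWithinAt_ciSup
      (eventually_nhdsWithin_of_forall fun _ hα => bddAbove_range_renyiInfo hW hα) fun P =>
        (continuousAt_renyiInfo_one P.2 hW).continuousWithinAt.lowerSemicontinuousWithinAt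
  · exact eventually_nhdsWithin_of_forall fun α hα =>
      (renyiCap_monotoneOn hW hα ⟨one_pos, le_rfl⟩ hα.2).trans_lt hc

end Capacity

/-- the Rényi capacity is nondecreasing and continuous in the order on `(0,1]`. -/
theorem renyiCap_monotone_continuous {X Y : Type*} [Fintype X] [Fintype Y] [Nonempty X]
    (W : X → Y → ℝ) (hW : ∀ x, IsPMF (W x)) :
    MonotoneOn (fun α => renyiCap α W) (Set.Ioc 0 1) ∧
    ContinuousOn (fun α => renyiCap α W) (Set.Ioc 0 1) := by
  refine ⟨renyiCap_monotoneOn hW, fun γ hγ => ?_⟩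
  rcases hγ.2.lt_or_eq with hγ1 | rfl
  · exact ((continuousOn_renyiCap_Ioo hW).continuousAt (Ioo_mem_nhds hγ.1 hγ1)).continuousWithinAt
  · exact continuousWithinAt_renyiCap_one hW
end

section
/- For any stochastic matrix W from a finite set X to pmfs on a finite set Y and α ∈ (0,1), the order-α Rényi capacity satisfies C_α(W) ≤ C_{1/2}(W)/(1-α). -/
open Real MeasureTheory Filter

/-!
Fix an input distribution `P` and put `S_α = ∑_y (∑_x P(x) W(y|x)^α)^{1/α}`, so that
`I_α(P;W) = (α/(α-1)) log S_α` with `0 < S_α ≤ 1` for `0 < α ≤ 1`. The claim follows from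
`(1 - α) I_α(P;W) ≤ I_{1/2}(P;W)`, that is `S_{1/2} ≤ S_α^α`, for every `P`. For `α ≥ 1/2` this is
the monotonicity of weighted power means, `S_{1/2} ≤ S_α ≤ S_α^α`. For `α < 1/2`, Hölder's
inequality applied once in `x` and once in `y` gives `S_{1/2} ≤ S_α^{α/(1-α)} ≤ S_α^α`.
-/

open Finset

theorem sum_rpow_mul_rpow_le {ι : Type*} (s : Finset ι) {f g : ι → ℝ}
    (hf : ∀ i ∈ s, 0 ≤ f i) (hg : ∀ i ∈ s, 0 ≤ g i) {θ : ℝ} (hθ0 : 0 < θ) (hθ1 : θ < 1) :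
    ∑ i ∈ s, f i ^ θ * g i ^ (1 - θ) ≤ (∑ i ∈ s, f i) ^ θ * (∑ i ∈ s, g i) ^ (1 - θ) := by
  have hθ1' : 1 - θ ≠ 0 := (sub_pos.2 hθ1).ne'
  have holder := inner_le_Lp_mul_Lq_of_nonneg s
    (HolderConjugate.inv_inv hθ0 (sub_pos.2 hθ1) (add_sub_cancel θ 1))
    (fun i hi => rpow_nonneg (hf i hi) θ) (fun i hi => rpow_nonneg (hg i hi) (1 - θ))
  simpa [sum_congr rfl fun i hi => rpow_rpow_inv (hf i hi) hθ0.ne',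
    sum_congr rfl fun i hi => rpow_rpow_inv (hg i hi) hθ1'] using holder

theorem sum_mul_rpow_mul_rpow_le {ι : Type*} (s : Finset ι) {w f g : ι → ℝ}
    (hw : ∀ i ∈ s, 0 ≤ w i) (hf : ∀ i ∈ s, 0 ≤ f i) (hg : ∀ i ∈ s, 0 ≤ g i)
    {θ : ℝ} (hθ0 : 0 < θ) (hθ1 : θ < 1) :
    ∑ i ∈ s, w i * (f i ^ θ * g i ^ (1 - θ)) ≤
      (∑ i ∈ s, w i * f i) ^ θ * (∑ i ∈ s, w i * g i) ^ (1 - θ) := by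
  refine le_of_eq_of_le (sum_congr rfl fun i hi => ?_) (sum_rpow_mul_rpow_le s
    (fun i hi => mul_nonneg (hw i hi) (hf i hi)) (fun i hi => mul_nonneg (hw i hi) (hg i hi))
    hθ0 hθ1)
  rw [mul_rpow (hw i hi) (hf i hi), mul_rpow (hw i hi) (hg i hi), mul_mul_mul_comm,
    ← rpow_add' (hw i hi) (by simp), add_sub_cancel, rpow_one]

theorem powerMean_le_powerMean {ι : Type*} (s : Finset ι) {w z : ι → ℝ}
    (hw : ∀ i ∈ s, 0 ≤ w i) (hw' : ∑ i ∈ s, w i = 1) (hz : ∀ i ∈ s, 0 ≤ z i)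
    {p q : ℝ} (hp : 0 < p) (hpq : p ≤ q) :
    (∑ i ∈ s, w i * z i ^ p) ^ p⁻¹ ≤ (∑ i ∈ s, w i * z i ^ q) ^ q⁻¹ := by
  have hq : 0 < q := hp.trans_le hpq
  have jensen := rpow_arith_mean_le_arith_mean_rpow s w (fun i => z i ^ p) hw hw'
    (fun i hi => rpow_nonneg (hz i hi) p) ((one_le_div hp).2 hpq)
  have hpow : ∀ i ∈ s, w i * (z i ^ p) ^ (q / p) = w i * z i ^ q := fun i hi => by
    rw [← rpow_mul (hz i hi), mul_div_cancel₀ q hp.ne']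
  have hsum_nonneg : 0 ≤ ∑ i ∈ s, w i * z i ^ p :=
    sum_nonneg fun i hi => mul_nonneg (hw i hi) (rpow_nonneg (hz i hi) p)
  calc (∑ i ∈ s, w i * z i ^ p) ^ p⁻¹
      = ((∑ i ∈ s, w i * z i ^ p) ^ (q / p)) ^ q⁻¹ := by
        rw [← rpow_mul hsum_nonneg]
        field_simp
    _ ≤ (∑ i ∈ s, w i * z i ^ q) ^ q⁻¹ := by
        rw [← sum_congr rfl hpow]
        exact rpow_le_rpow (rpow_nonneg hsum_nonneg _) jensen (inv_nonneg.2 hq.le)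

noncomputable def renyiSum {X Y : Type*} [Fintype X] [Fintype Y] (α : ℝ) (P : X → ℝ)
    (W : X → Y → ℝ) : ℝ :=
  ∑ y, (∑ x, P x * W x y ^ α) ^ α⁻¹

section Channel

variable {X Y : Type*} [Fintype X] [Fintype Y] {W : X → Y → ℝ} {P : X → ℝ} {α β : ℝ}

theorem IsPMF.nonempty (hP : IsPMF P) : Nonempty X :=
  (nonempty_of_sum_ne_zero (hP.2 ▸ one_ne_zero)).to_type

theorem renyiInfo_eq (hα : α ≠ 1) :
    renyiInfo α P W = α / (α - 1) * log (renyiSum α P W) :=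
  if_neg hα

theorem sum_sum_mul_eq_one (hW : ∀ x, IsPMF (W x)) (hP : IsPMF P) :
    ∑ y, ∑ x, P x * W x y = 1 := by
  rw [sum_comm]
  simp [← mul_sum, (hW _).2, hP.2]

theorem renyiSum_le_renyiSum (hW : ∀ x, IsPMF (W x)) (hP : IsPMF P) (hβ : 0 < β)
    (hβα : β ≤ α) : renyiSum β P W ≤ renyiSum α P W :=
  sum_le_sum fun y _ =>
    powerMean_le_powerMean univ (fun x _ => hP.1 x) hP.2 (fun x _ => (hW x).1 y) hβ hβα

theorem renyiSum_le_one (hW : ∀ x, IsPMF (W x)) (hP : IsPMF P) (hα0 : 0 < α) (hα1 : α ≤ 1) :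
    renyiSum α P W ≤ 1 :=
  calc renyiSum α P W ≤ renyiSum 1 P W := renyiSum_le_renyiSum hW hP hα0 hα1
    _ = 1 := by simp [renyiSum, sum_sum_mul_eq_one hW hP]

theorem rpow_inv_le_renyiSum (hW : ∀ x, IsPMF (W x)) (hP : IsPMF P) (hα : 0 < α) (x₀ : X) :
    P x₀ ^ α⁻¹ ≤ renyiSum α P W := by
  have hterm : ∀ x y, 0 ≤ P x * W x y ^ α := fun x y =>
    mul_nonneg (hP.1 x) (rpow_nonneg ((hW x).1 y) α)
  calc P x₀ ^ α⁻¹ = ∑ y, (P x₀ * W x₀ y ^ α) ^ α⁻¹ := by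
        simp [mul_rpow (hP.1 x₀) (rpow_nonneg ((hW x₀).1 _) α), rpow_rpow_inv ((hW x₀).1 _)
          hα.ne', ← mul_sum, (hW x₀).2]
    _ ≤ renyiSum α P W := sum_le_sum fun y _ => rpow_le_rpow (hterm x₀ y)
        (single_le_sum (fun x _ => hterm x y) (mem_univ x₀)) (inv_nonneg.2 hα.le)

theorem card_inv_rpow_le_renyiSum (hW : ∀ x, IsPMF (W x)) (hP : IsPMF P) (hα : 0 < α) :
    (Fintype.card X : ℝ)⁻¹ ^ α⁻¹ ≤ renyiSum α P W := by
  have := hP.nonempty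
  obtain ⟨x₀, -, hx₀⟩ : ∃ x ∈ univ, (Fintype.card X : ℝ)⁻¹ ≤ P x := by
    refine exists_le_of_sum_le univ_nonempty ?_
    simp [hP.2]
  exact (rpow_le_rpow (by positivity) hx₀ (inv_nonneg.2 hα.le)).trans
    (rpow_inv_le_renyiSum hW hP hα x₀)

theorem renyiSum_pos (hW : ∀ x, IsPMF (W x)) (hP : IsPMF P) (hα : 0 < α) :
    0 < renyiSum α P W := by
  have := hP.nonempty
  exact lt_of_lt_of_le (by positivity) (card_inv_rpow_le_renyiSum hW hP hα)

theorem renyiInfo_nonneg (hW : ∀ x, IsPMF (W x)) (hP : IsPMF P) (hα0 : 0 < α) (hα1 : α < 1) :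
    0 ≤ renyiInfo α P W := by
  rw [renyiInfo_eq hα1.ne]
  exact mul_nonneg_of_nonpos_of_nonpos (div_nonpos_of_nonneg_of_nonpos hα0.le (by linarith))
    (log_nonpos (renyiSum_pos hW hP hα0).le (renyiSum_le_one hW hP hα0 hα1.le))

theorem renyiInfo_le_log_card_s9 (hW : ∀ x, IsPMF (W x)) (hP : IsPMF P) (hα0 : 0 < α)
    (hα1 : α < 1) : renyiInfo α P W ≤ log (Fintype.card X) / (1 - α) := by
  have := hP.nonempty
  have hlog := log_le_log (by positivity) (card_inv_rpow_le_renyiSum hW hP hα0)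
  rw [log_rpow (by positivity), log_inv] at hlog
  have hαlog : -log (Fintype.card X) ≤ α * log (renyiSum α P W) := by
    rwa [← inv_mul_le_iff₀ hα0]
  have hα1' : α - 1 ≠ 0 := sub_ne_zero.2 hα1.ne
  have h1α : 1 - α ≠ 0 := sub_ne_zero.2 hα1.ne'
  rw [renyiInfo_eq hα1.ne, show α / (α - 1) * log (renyiSum α P W) =
      -(α * log (renyiSum α P W)) / (1 - α) by field_simp; ring]
  exact div_le_div_of_nonneg_right (by linarith) (by linarith)

theorem bddAbove_renyiInfo (hW : ∀ x, IsPMF (W x)) (hα0 : 0 < α) (hα1 : α < 1) :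
    BddAbove {c | ∃ P : X → ℝ, IsPMF P ∧ c = renyiInfo α P W} :=
  ⟨_, by rintro _ ⟨P, hP, rfl⟩; exact renyiInfo_le_log_card_s9 hW hP hα0 hα1⟩

theorem renyiSum_le_rpow_of_lt (hW : ∀ x, IsPMF (W x)) (hP : IsPMF P) (hα0 : 0 < α)
    (hαβ : α < β) (hβ1 : β < 1) :
    renyiSum β P W ≤ renyiSum α P W ^ (α * (1 - β) / (β * (1 - α))) := by
  have hβ0 : 0 < β := hα0.trans hαβ
  set θ := (1 - β) / (1 - α) with hθ
  set t := α * (1 - β) / (β * (1 - α)) with ht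
  have hθ0 : 0 < θ := div_pos (by linarith) (by linarith)
  have hθ1 : θ < 1 := (div_lt_one (by linarith)).2 (by linarith)
  have ht0 : 0 < t := div_pos (by nlinarith) (by nlinarith)
  have ht1 : t < 1 := (div_lt_one (by nlinarith)).2 (by nlinarith)
  have h1α : 1 - α ≠ 0 := by linarith
  have hexp : α * θ + (1 - θ) = β := by rw [hθ]; field_simp; ring
  have hexpA : θ * β⁻¹ = α⁻¹ * t := by rw [hθ, ht]; field_simp
  have hexpB : (1 - θ) * β⁻¹ = 1 - t := by rw [hθ, ht]; field_simp; ring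
  have hA : ∀ (γ : ℝ) y, 0 ≤ ∑ x, P x * W x y ^ γ := fun γ y =>
    sum_nonneg fun x _ => mul_nonneg (hP.1 x) (rpow_nonneg ((hW x).1 y) γ)
  have hB : ∀ y, 0 ≤ ∑ x, P x * W x y := fun y =>
    sum_nonneg fun x _ => mul_nonneg (hP.1 x) ((hW x).1 y)
  -- Since `β = θ α + (1 - θ) · 1`, Hölder in `x` interpolates `W ^ β` between `W ^ α` and `W`.
  have hpointwise : ∀ y, (∑ x, P x * W x y ^ β) ^ β⁻¹ ≤
      ((∑ x, P x * W x y ^ α) ^ α⁻¹) ^ t * (∑ x, P x * W x y) ^ (1 - t) := by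
    intro y
    have holder := sum_mul_rpow_mul_rpow_le univ (fun x _ => hP.1 x)
      (fun x _ => rpow_nonneg ((hW x).1 y) α) (fun x _ => (hW x).1 y) hθ0 hθ1
    rw [sum_congr rfl fun x _ => by rw [← rpow_mul ((hW x).1 y),
      ← rpow_add' ((hW x).1 y) (hexp.symm ▸ hβ0.ne'), hexp]] at holder
    calc (∑ x, P x * W x y ^ β) ^ β⁻¹
        ≤ ((∑ x, P x * W x y ^ α) ^ θ * (∑ x, P x * W x y) ^ (1 - θ)) ^ β⁻¹ :=
          rpow_le_rpow (hA β y) holder (inv_nonneg.2 hβ0.le)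
      _ = ((∑ x, P x * W x y ^ α) ^ α⁻¹) ^ t * (∑ x, P x * W x y) ^ (1 - t) := by
          rw [mul_rpow (rpow_nonneg (hA α y) _) (rpow_nonneg (hB y) _), ← rpow_mul (hA α y),
            ← rpow_mul (hB y), ← rpow_mul (hA α y), hexpA, hexpB]
  calc renyiSum β P W
      ≤ ∑ y, ((∑ x, P x * W x y ^ α) ^ α⁻¹) ^ t * (∑ x, P x * W x y) ^ (1 - t) :=
        sum_le_sum fun y _ => hpointwise y
    _ ≤ renyiSum α P W ^ t * (∑ y, ∑ x, P x * W x y) ^ (1 - t) :=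
        sum_rpow_mul_rpow_le univ (fun y _ => rpow_nonneg (hA α y) _) (fun y _ => hB y) ht0 ht1
    _ = renyiSum α P W ^ t := by rw [sum_sum_mul_eq_one hW hP, one_rpow, mul_one]

theorem renyiSum_half_le_rpow (hW : ∀ x, IsPMF (W x)) (hP : IsPMF P) (hα0 : 0 < α)
    (hα1 : α < 1) : renyiSum (1 / 2) P W ≤ renyiSum α P W ^ α := by
  have hpos := renyiSum_pos hW hP hα0
  have hle_one := renyiSum_le_one hW hP hα0 hα1.le
  rcases le_or_gt (1 / 2) α with hα | hα
  · calc renyiSum (1 / 2) P W ≤ renyiSum α P W := renyiSum_le_renyiSum hW hP one_half_pos hα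
      _ ≤ renyiSum α P W ^ α := self_le_rpow_of_le_one hpos.le hle_one hα1.le
  · calc renyiSum (1 / 2) P W ≤ renyiSum α P W ^ (α * (1 - 1 / 2) / (1 / 2 * (1 - α))) :=
          renyiSum_le_rpow_of_lt hW hP hα0 hα one_half_lt_one
      _ ≤ renyiSum α P W ^ α := by
          refine rpow_le_rpow_of_exponent_ge hpos hle_one ?_
          rw [le_div_iff₀ (by linarith)]
          nlinarith

theorem one_sub_mul_renyiInfo_le_renyiInfo_half (hW : ∀ x, IsPMF (W x)) (hP : IsPMF P)
    (hα0 : 0 < α) (hα1 : α < 1) : (1 - α) * renyiInfo α P W ≤ renyiInfo (1 / 2) P W := by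
  have hlog := log_le_log (renyiSum_pos hW hP one_half_pos) (renyiSum_half_le_rpow hW hP hα0 hα1)
  rw [log_rpow (renyiSum_pos hW hP hα0)] at hlog
  have hα1' : α - 1 ≠ 0 := sub_ne_zero.2 hα1.ne
  rw [renyiInfo_eq hα1.ne, renyiInfo_eq (by norm_num), show (1 : ℝ) / 2 / (1 / 2 - 1) = -1 by
    norm_num, show (1 - α) * (α / (α - 1) * log (renyiSum α P W)) = -(α * log (renyiSum α P W))
    by field_simp; ring]
  linarith

end Channel

theorem renyiCap_le_half_capacity_general {X Y : Type*} [Fintype X] [Fintype Y]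
    (W : X → Y → ℝ) (hW : ∀ x, IsPMF (W x)) (α : ℝ) (hα : α ∈ Set.Ioo (0:ℝ) 1) :
    renyiCap α W ≤ renyiCap (1/2) W / (1 - α) := by
  obtain ⟨hα0, hα1⟩ := hα
  have h1α : 0 < 1 - α := sub_pos.2 hα1
  have hcap_nonneg : 0 ≤ renyiCap (1 / 2) W :=
    sSup_nonneg <| by
      rintro _ ⟨P, hP, rfl⟩
      exact renyiInfo_nonneg hW hP one_half_pos one_half_lt_one
  refine Real.sSup_le ?_ (div_nonneg hcap_nonneg h1α.le)
  rintro _ ⟨P, hP, rfl⟩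
  rw [le_div_iff₀ h1α, mul_comm]
  exact (one_sub_mul_renyiInfo_le_renyiInfo_half hW hP hα0 hα1).trans
    (le_csSup (bddAbove_renyiInfo hW one_half_pos one_half_lt_one) ⟨P, hP, rfl⟩)

/-- `C_α(W) ≤ C_{1/2}(W)/(1-α)` for `α ∈ (0,1)`. -/
theorem renyiCap_le_half_capacity {X Y : Type*} [Fintype X] [Fintype Y] [Nonempty X]
    (W : X → Y → ℝ) (hW : ∀ x, IsPMF (W x)) (α : ℝ) (hα : α ∈ Set.Ioo (0:ℝ) 1) :
    renyiCap α W ≤ renyiCap (1/2) W / (1 - α) :=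
  renyiCap_le_half_capacity_general W hW α hα
end
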